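/- If g is an element of the first Grigorchuk group 𝒢 and t : C(1) → C(n) is a binary tree, then t ∘ g = p_α ∘ (g₁ ⊕ ⋯ ⊕ g_n) ∘ t' for some binary tree t' : C(1) → C(n), some elements g₁, …, g_n ∈ 𝒢, and some permutation α ∈ S_n. -/

import Mathlib

/-! Basic setup: the Cantor set `Δ = ℕ → Bool` and `C n = Fin n × Δ`,
the disjoint union of `n` copies of the Cantor set. -/

abbrev Δ : Type := ℕ → Bool
abbrev C (n : ℕ) : Type := Fin n × Δ

/-- A bijection between discrete spaces, as a homeomorphism. -/
def discHomeo {X Y : Type*} [TopologicalSpace X] [TopologicalSpace Y]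
    [DiscreteTopology X] [DiscreteTopology Y] (e : X ≃ Y) : X ≃ₜ Y :=
  ⟨e, continuous_of_discreteTopology, continuous_of_discreteTopology⟩

/-- The permutation homeomorphism `p_α : C n ≃ₜ C n`, permuting the copies
of the Cantor set according to `α`. -/
def permC {n : ℕ} (α : Equiv.Perm (Fin n)) : C n ≃ₜ C n :=
  (discHomeo α).prodCongr (Homeomorph.refl Δ)

/-- Cast between `C m` and `C n` when `m = n`. -/
def castC {m n : ℕ} (h : m = n) : C m ≃ₜ C n :=
  (discHomeo (finCongr h)).prodCongr (Homeomorph.refl Δ)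

/-- `C (m + n)` is the disjoint union of `C m` and `C n` (first `m` copies,
then the remaining `n` copies). -/
def toSum (m n : ℕ) : C (m + n) ≃ₜ (C m) ⊕ (C n) :=
  ((discHomeo finSumFinEquiv.symm).prodCongr (Homeomorph.refl Δ)).trans
    (Homeomorph.sumProdDistrib)

/-- The direct sum `f ⊕ g` of homeomorphisms, acting as `f` on the first `m`
copies (sent to the first `m'` copies) and as `g` on the last `n` copies. -/
def dsum {m m' n n' : ℕ} (f : C m ≃ₜ C m') (g : C n ≃ₜ C n') :
    C (m + n) ≃ₜ C (m' + n') :=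
  ((toSum m n).trans (f.sumCongr g)).trans (toSum m' n').symm

/-- The split homeomorphism `x : C 1 ≃ₜ C 2`: a sequence starting with letter
`i` is sent to the `(i+1)`-st copy of the Cantor set, deleting the first letter. -/
def split : C 1 ≃ₜ C 2 where
  toFun p := (finTwoEquiv.symm (p.2 0), fun k => p.2 (k + 1))
  invFun p := (0, fun k => Nat.casesOn k (finTwoEquiv p.1) (fun j => p.2 j))
  left_inv := by
    rintro ⟨i, w⟩
    refine Prod.ext (Subsingleton.elim _ _) ?_
    funext k
    cases k <;> simp
  right_inv := by
    rintro ⟨i, w⟩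
    refine Prod.ext ?_ rfl
    simp
  continuous_toFun := by
    refine Continuous.prodMk ?_ ?_
    · exact Continuous.comp continuous_of_discreteTopology
        ((continuous_apply 0).comp continuous_snd)
    · exact continuous_pi fun k => (continuous_apply (k + 1)).comp continuous_snd
  continuous_invFun := by
    refine Continuous.prodMk continuous_const ?_
    refine continuous_pi fun k => ?_
    cases k with
    | zero => exact Continuous.comp continuous_of_discreteTopology continuous_fst
    | succ j => exact (continuous_apply j).comp continuous_snd

/-- The split homeomorphism `x_i^{(n)} = id_{i-1} ⊕ x ⊕ id_{n-i} : C n ≃ₜ C (n+1)`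
(with `i` zero-indexed, so `i : Fin n` splits the `(i+1)`-st copy). -/
def splitAt {n : ℕ} (i : Fin n) : C n ≃ₜ C (n + 1) :=
  ((castC (show n = (i : ℕ) + 1 + (n - 1 - i) by have := i.isLt; omega)).trans
    (dsum (dsum (Homeomorph.refl (C i)) split) (Homeomorph.refl (C (n - 1 - i))))).trans
    (castC (show (i : ℕ) + 2 + (n - 1 - i) = n + 1 by have := i.isLt; omega))

/-- `IsForest f` says that `f : C m ≃ₜ C n` is a binary forest, i.e. a
(possibly empty) composition of split homeomorphisms.  A binary tree is a
binary forest with domain `C 1`. -/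
inductive IsForest : ∀ {m n : ℕ}, (C m ≃ₜ C n) → Prop where
  | refl (m : ℕ) : IsForest (Homeomorph.refl (C m))
  | step {m n : ℕ} {f : C m ≃ₜ C n} (i : Fin n) (hf : IsForest f) :
      IsForest (f.trans (splitAt i))

/-! The Grigorchuk generators `σ, b, c, d`, defined via the Grigorchuk automaton:
on binary sequences, `σ` flips the first letter, and `b(0w)=0σ(w)`, `b(1w)=1c(w)`,
`c(0w)=0σ(w)`, `c(1w)=1d(w)`, `d(0w)=0w`, `d(1w)=1b(w)`. -/

/-- States of the Grigorchuk automaton: the identity, `σ`, `b`, `c`, `d`. -/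
inductive GS : Type | e | s | b | c | d
deriving DecidableEq

instance : Fintype GS :=
  ⟨{.e, .s, .b, .c, .d}, by intro x; cases x <;> decide⟩

instance : TopologicalSpace GS := ⊥
instance : DiscreteTopology GS := ⟨rfl⟩

/-- Output function of the Grigorchuk automaton. -/
def GS.out : GS → Bool → Bool
  | .s, i => !i
  | _,  i => i

/-- Transition function of the Grigorchuk automaton. -/
def GS.step : GS → Bool → GS
  | .e, _ => .e
  | .s, _ => .e
  | .b, false => .s
  | .b, true  => .c
  | .c, false => .s
  | .c, true  => .d
  | .d, false => .e
  | .d, true  => .b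

/-- The state of the automaton started in state `g` after reading `w 0, …, w (n-1)`. -/
def GS.stArr (g : GS) (w : Δ) : ℕ → GS
  | 0 => g
  | n + 1 => (GS.stArr g w n).step (w n)

/-- The action of the automaton state `g` on infinite binary sequences. -/
def GS.act (g : GS) (w : Δ) : Δ := fun n => (GS.stArr g w n).out (w n)

lemma GS.out_out : ∀ (g : GS) (i : Bool), g.out (g.out i) = i := by decide

lemma GS.step_out : ∀ (g : GS) (i : Bool), g.step (g.out i) = g.step i := by decide

lemma GS.stArr_act (g : GS) (w : Δ) : ∀ n, GS.stArr g (GS.act g w) n = GS.stArr g w n := by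
  intro n
  induction n with
  | zero => rfl
  | succ n ih => rw [GS.stArr, GS.stArr, ih, GS.act, GS.step_out]

lemma GS.act_act (g : GS) (w : Δ) : GS.act g (GS.act g w) = w := by
  funext n
  rw [GS.act, GS.stArr_act, GS.act, GS.out_out]

lemma GS.continuous_stArr (g : GS) (n : ℕ) : Continuous (fun w : Δ => GS.stArr g w n) := by
  induction n with
  | zero => exact continuous_const
  | succ n ih =>
      exact Continuous.comp (f := fun w : Δ => ((GS.stArr g w n), w n))
        (g := fun p : GS × Bool => p.1.step p.2)
        continuous_of_discreteTopology (ih.prodMk (continuous_apply n))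

lemma GS.continuous_act (g : GS) : Continuous (GS.act g) := by
  refine continuous_pi fun n => ?_
  exact Continuous.comp (f := fun w : Δ => ((GS.stArr g w n), w n))
    (g := fun p : GS × Bool => p.1.out p.2)
    continuous_of_discreteTopology ((GS.continuous_stArr g n).prodMk (continuous_apply n))

/-- The homeomorphism of the Cantor set determined by an automaton state. -/
def GS.homeo (g : GS) : Δ ≃ₜ Δ where
  toFun := GS.act g
  invFun := GS.act g
  left_inv := GS.act_act g
  right_inv := GS.act_act g
  continuous_toFun := GS.continuous_act g
  continuous_invFun := GS.continuous_act g

/-- Lift a homeomorphism of the Cantor set to `C 1`. -/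
def liftC1 (h : Δ ≃ₜ Δ) : C 1 ≃ₜ C 1 := (Homeomorph.refl (Fin 1)).prodCongr h

/-- The Grigorchuk generator `σ` (flips the first letter). -/
def gσ : C 1 ≃ₜ C 1 := liftC1 (GS.homeo .s)
/-- The Grigorchuk generator `b`. -/
def gb : C 1 ≃ₜ C 1 := liftC1 (GS.homeo .b)
/-- The Grigorchuk generator `c`. -/
def gc : C 1 ≃ₜ C 1 := liftC1 (GS.homeo .c)
/-- The Grigorchuk generator `d`. -/
def gd : C 1 ≃ₜ C 1 := liftC1 (GS.homeo .d)

/-- The group of self-homeomorphisms of `C n`, with `(f * g) x = f (g x)`. -/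
instance homeoGroup (n : ℕ) : Group (C n ≃ₜ C n) where
  mul f g := g.trans f
  one := Homeomorph.refl _
  inv := Homeomorph.symm
  mul_assoc a b c := rfl
  one_mul a := rfl
  mul_one a := rfl
  inv_mul_cancel a := Homeomorph.self_trans_symm a

/-- The first Grigorchuk group `𝒢 = ⟨σ, b, c, d⟩`. -/
def Grig : Subgroup (C 1 ≃ₜ C 1) :=
  Subgroup.closure {gσ, gb, gc, gd}

/-- The set `K = {1, b, c, d}` of homeomorphisms of `C 1`. -/
def Kset : Set (C 1 ≃ₜ C 1) := {Homeomorph.refl (C 1), gb, gc, gd}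

/-- The `n`-fold direct sum `k₁ ⊕ ⋯ ⊕ k_n` of homeomorphisms of `C 1`. -/
def dsumFam : {n : ℕ} → (Fin n → (C 1 ≃ₜ C 1)) → (C n ≃ₜ C n)
  | 0, _ => Homeomorph.refl _
  | n + 1, k => dsum (dsumFam (fun i : Fin n => k i.castSucc)) (k (Fin.last n))

/-- The direct sum `h₁ ⊕ ⋯ ⊕ h_n` of a family of homeomorphisms
`h i : C 1 ≃ₜ C (m i)`. -/
def dsumFamH : {n : ℕ} → {m : Fin n → ℕ} → (∀ i, C 1 ≃ₜ C (m i)) →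
    (C n ≃ₜ C (∑ i, m i))
  | 0, _, _ => castC (by simp)
  | n + 1, m, h =>
      (dsum (dsumFamH (fun i : Fin n => h i.castSucc)) (h (Fin.last n))).trans
        (castC (Fin.sum_univ_castSucc m).symm)

/-- The group `K_n = {p_α ∘ (k₁ ⊕ ⋯ ⊕ k_n) : α ∈ S_n, kᵢ ∈ K}`. -/
def Kn (n : ℕ) : Set (C n ≃ₜ C n) :=
  {h | ∃ (α : Equiv.Perm (Fin n)) (k : Fin n → (C 1 ≃ₜ C 1)),
    (∀ i, k i ∈ Kset) ∧ h = (dsumFam k).trans (permC α)}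

/-- `σ_j : C m ≃ₜ C m`, acting as `σ` on the `(j+1)`-st copy (zero-indexed `j`)
of the Cantor set and as the identity elsewhere. -/
def sigmaAt {m : ℕ} (j : Fin m) : C m ≃ₜ C m :=
  dsumFam (fun i => if i = j then gσ else Homeomorph.refl (C 1))

/-- Membership in the groupoid `𝔙` generated by all split homeomorphisms and
all permutation homeomorphisms. -/
inductive InV : ∀ {m n : ℕ}, (C m ≃ₜ C n) → Prop where
  | split {n : ℕ} (i : Fin n) : InV (splitAt i)
  | perm {n : ℕ} (α : Equiv.Perm (Fin n)) : InV (permC α)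
  | comp {m n p : ℕ} {f : C m ≃ₜ C n} {g : C n ≃ₜ C p} :
      InV f → InV g → InV (f.trans g)
  | inv {m n : ℕ} {f : C m ≃ₜ C n} : InV f → InV f.symm

/-- Membership in Röver's groupoid `𝔙𝒢`, generated by `𝔙` together with the
elements of the Grigorchuk group `𝒢`. -/
inductive InVG : ∀ {m n : ℕ}, (C m ≃ₜ C n) → Prop where
  | split {n : ℕ} (i : Fin n) : InVG (splitAt i)
  | perm {n : ℕ} (α : Equiv.Perm (Fin n)) : InVG (permC α)
  | grig {g : C 1 ≃ₜ C 1} : g ∈ Grig → InVG g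
  | comp {m n p : ℕ} {f : C m ≃ₜ C n} {g : C n ≃ₜ C p} :
      InVG f → InVG g → InVG (f.trans g)
  | inv {m n : ℕ} {f : C m ≃ₜ C n} : InVG f → InVG f.symm

/-- The coset `[f] = K_n f = {k ∘ f : k ∈ K_n}` of `f : C 1 ≃ₜ C n`. -/
def coset {n : ℕ} (f : C 1 ≃ₜ C n) : Set (C 1 ≃ₜ C n) :=
  {h | ∃ k ∈ Kn n, h = f.trans k}

/-- The ambient type for vertices of the poset `𝒫`: a rank `n` together with
a set of homeomorphisms `C 1 ≃ₜ C n`. -/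
def PP : Type := Σ n : ℕ, Set (C 1 ≃ₜ C n)

/-- A member of `PP` is a vertex of `𝒫` if it is the coset `[f] = K_n f` of
some `f : C 1 ≃ₜ C n` in Röver's groupoid. -/
def IsVert (v : PP) : Prop :=
  ∃ f : C 1 ≃ₜ C v.1, InVG f ∧ v.2 = coset f

/-- `w` is a splitting of `v` if `v = [f]` and `w = [x_i ∘ f]` for some
representative `f` and some index `i`. -/
def SplittingOf (v w : PP) : Prop :=
  ∃ (n : ℕ) (f : C 1 ≃ₜ C n) (i : Fin n), InVG f ∧
    v = ⟨n, coset f⟩ ∧ w = ⟨n + 1, coset (f.trans (splitAt i))⟩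

/-- `w` is an expansion of `v` (written `v ≤ w`): `w` is obtained from `v` by
a finite (possibly empty) sequence of splittings. -/
def Expansion : PP → PP → Prop := Relation.ReflTransGen SplittingOf

/-- The four possible elementary pieces `1, x, σ₁ ∘ x, x₁ ∘ x` (with their
ranks), used to define elementary expansions. -/
def elemSet : Set (Σ m : ℕ, (C 1 ≃ₜ C m)) :=
  {⟨1, Homeomorph.refl (C 1)⟩, ⟨2, split⟩,
   ⟨2, split.trans (sigmaAt (0 : Fin 2))⟩,
   ⟨3, split.trans (splitAt (0 : Fin 2))⟩}

/-- `w` is an elementary expansion of `v`: `v = [f]` and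
`w = [(u₁ ⊕ ⋯ ⊕ u_n) ∘ f]` where each `uᵢ ∈ {1, x, σ₁∘x, x₁∘x}`. -/
def ElemExp (v w : PP) : Prop :=
  ∃ (n : ℕ) (f : C 1 ≃ₜ C n) (m : Fin n → ℕ) (h : ∀ i, C 1 ≃ₜ C (m i)),
    InVG f ∧ (∀ i, (⟨m i, h i⟩ : Σ m : ℕ, (C 1 ≃ₜ C m)) ∈ elemSet) ∧
    v = ⟨n, coset f⟩ ∧ w = ⟨∑ i, m i, coset (f.trans (dsumFamH h))⟩


/-!
Every `g ∈ 𝒢` is self-similar: `g (b w) = (b xor ε) g_b(w)` with sections `g_b ∈ 𝒢`; this holds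
for the automaton generators and is preserved by products and inverses. Call a homeomorphism of
`C n` a Grigorchuk monomial if it permutes the copies and acts on each one by an element of `𝒢`.
Self-similarity lets a split be pushed through a monomial: `x_i ∘ F = F' ∘ x_j` with `F'` again a
monomial, `j` being the copy that `F` sends to copy `i`. Pushing `g` through the splits of `t`
one at a time yields `t ∘ g = F ∘ t'`.
-/

def cantorCons (b : Bool) (w : Δ) : Δ
  | 0 => b
  | n + 1 => w n

local infixr:67 " :: " => cantorCons

def onCantor (g : C 1 ≃ₜ C 1) (w : Δ) : Δ := (g (0, w)).2

lemma apply_zero_eq_onCantor (g : C 1 ≃ₜ C 1) (w : Δ) : g (0, w) = (0, onCantor g w) :=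
  Prod.ext (Subsingleton.elim _ _) rfl

lemma onCantor_mul (g h : C 1 ≃ₜ C 1) (w : Δ) :
    onCantor (g * h) w = onCantor g (onCantor h w) := by
  show (g (h (0, w))).2 = _
  rw [apply_zero_eq_onCantor h]
  rfl

lemma onCantor_inv_onCantor (g : C 1 ≃ₜ C 1) (w : Δ) : onCantor g⁻¹ (onCantor g w) = w := by
  rw [← onCantor_mul, inv_mul_cancel]
  rfl

lemma onCantor_onCantor_inv (g : C 1 ≃ₜ C 1) (w : Δ) : onCantor g (onCantor g⁻¹ w) = w := by
  rw [← onCantor_mul, mul_inv_cancel]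
  rfl

lemma GS.stArr_cons (g : GS) (b : Bool) (w : Δ) (n : ℕ) :
    GS.stArr g (b :: w) (n + 1) = GS.stArr (g.step b) w n := by
  induction n with
  | zero => rfl
  | succ n ih => rw [GS.stArr, ih]; rfl

lemma GS.act_cons (g : GS) (b : Bool) (w : Δ) :
    GS.act g (b :: w) = g.out b :: GS.act (g.step b) w := by
  funext n
  cases n with
  | zero => rfl
  | succ n => exact congrArg (GS.out · (w n)) (GS.stArr_cons g b w n)

lemma GS.stArr_e (w : Δ) (n : ℕ) : GS.stArr .e w n = .e := by
  induction n with
  | zero => rfl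
  | succ n ih => rw [GS.stArr, ih]; rfl

lemma liftC1_homeo_e : liftC1 (GS.homeo .e) = 1 := by
  ext ⟨s, w⟩ n
  · rfl
  · show GS.act .e w n = w n
    rw [GS.act, GS.stArr_e]
    rfl

lemma liftC1_homeo_mem_grig (g : GS) : liftC1 (GS.homeo g) ∈ Grig := by
  cases g with
  | e => rw [liftC1_homeo_e]; exact one_mem _
  | s => exact Subgroup.subset_closure (by simp [gσ])
  | b => exact Subgroup.subset_closure (by simp [gb])
  | c => exact Subgroup.subset_closure (by simp [gc])
  | d => exact Subgroup.subset_closure (by simp [gd])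

def HasSectionsInGrig (g : C 1 ≃ₜ C 1) : Prop :=
  ∃ (ε : Bool) (sec : Bool → C 1 ≃ₜ C 1), (∀ b, sec b ∈ Grig) ∧
    ∀ b w, onCantor g (b :: w) = xor b ε :: onCantor (sec b) w

lemma hasSectionsInGrig_liftC1_homeo (g : GS) : HasSectionsInGrig (liftC1 (GS.homeo g)) := by
  refine ⟨g.out false, fun b => liftC1 (GS.homeo (g.step b)),
    fun b => liftC1_homeo_mem_grig _, fun b w => ?_⟩
  have hout : g.out b = xor b (g.out false) := by cases g <;> cases b <;> rfl
  exact (GS.act_cons g b w).trans (by rw [hout]; rfl)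

lemma hasSectionsInGrig_one : HasSectionsInGrig 1 :=
  ⟨false, fun _ => 1, fun _ => one_mem _, fun b w => by rw [Bool.xor_false]; rfl⟩

lemma HasSectionsInGrig.mul {g h : C 1 ≃ₜ C 1} (hg : HasSectionsInGrig g)
    (hh : HasSectionsInGrig h) : HasSectionsInGrig (g * h) := by
  obtain ⟨εg, secg, hsecg, hgw⟩ := hg
  obtain ⟨εh, sech, hsech, hhw⟩ := hh
  refine ⟨xor εh εg, fun b => secg (xor b εh) * sech b,
    fun b => mul_mem (hsecg _) (hsech b), fun b w => ?_⟩
  rw [onCantor_mul, hhw, hgw, onCantor_mul, Bool.xor_assoc]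

lemma HasSectionsInGrig.inv {g : C 1 ≃ₜ C 1} (hg : HasSectionsInGrig g) :
    HasSectionsInGrig g⁻¹ := by
  obtain ⟨ε, sec, hsec, hgw⟩ := hg
  refine ⟨ε, fun b => (sec (xor b ε))⁻¹, fun b => inv_mem (hsec _), fun b w => ?_⟩
  have key : onCantor g (xor b ε :: onCantor (sec (xor b ε))⁻¹ w) = b :: w := by
    rw [hgw, onCantor_onCantor_inv, Bool.xor_assoc, Bool.xor_self, Bool.xor_false]
  rw [← key, onCantor_inv_onCantor]

lemma hasSectionsInGrig_of_mem {g : C 1 ≃ₜ C 1} (hg : g ∈ Grig) : HasSectionsInGrig g := by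
  induction hg using Subgroup.closure_induction with
  | mem x hx =>
    rcases hx with rfl | rfl | rfl | rfl <;> exact hasSectionsInGrig_liftC1_homeo _
  | one => exact hasSectionsInGrig_one
  | mul x y _ _ hx hy => exact hx.mul hy
  | inv x _ hx => exact hx.inv

lemma castC_apply {m n : ℕ} (h : m = n) (s : Fin m) (w : Δ) :
    castC h (s, w) = (Fin.cast h s, w) := rfl

lemma permC_apply {n : ℕ} (α : Equiv.Perm (Fin n)) (s : Fin n) (w : Δ) :
    permC α (s, w) = (α s, w) := rfl

lemma dsum_apply_castAdd {m m' n n' : ℕ} (f : C m ≃ₜ C m') (g : C n ≃ₜ C n')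
    (s : Fin m) (w : Δ) :
    dsum f g (Fin.castAdd n s, w) = (Fin.castAdd n' (f (s, w)).1, (f (s, w)).2) := by
  simp [dsum, toSum, discHomeo, Homeomorph.sumCongr]

lemma dsum_apply_natAdd {m m' n n' : ℕ} (f : C m ≃ₜ C m') (g : C n ≃ₜ C n')
    (s : Fin n) (w : Δ) :
    dsum f g (Fin.natAdd m s, w) = (Fin.natAdd m' (g (s, w)).1, (g (s, w)).2) := by
  simp [dsum, toSum, discHomeo, Homeomorph.sumCongr]

lemma dsumFam_apply {n : ℕ} (gs : Fin n → C 1 ≃ₜ C 1) (s : Fin n) (w : Δ) :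
    dsumFam gs (s, w) = (s, onCantor (gs s) w) := by
  induction n with
  | zero => exact s.elim0
  | succ n ih =>
    show dsum (dsumFam fun i : Fin n => gs i.castSucc) (gs (Fin.last n)) (s, w) = _
    induction s using Fin.lastCases with
    | last =>
      rw [show Fin.last n = Fin.natAdd n (0 : Fin 1) from rfl, dsum_apply_natAdd]
      exact Prod.ext (Fin.ext (by simp)) rfl
    | cast s =>
      rw [show s.castSucc = Fin.castAdd 1 s from rfl, dsum_apply_castAdd, ih]
      rfl

def splitChild {n : ℕ} (i : Fin n) (b : Bool) : Fin (n + 1) :=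
  bif b then i.succ else i.castSucc

lemma split_apply_cons (b : Bool) (w : Δ) : split (0, b :: w) = (finTwoEquiv.symm b, w) := rfl

lemma splitAt_apply_of_ne {n : ℕ} {i s : Fin n} (h : s ≠ i) (w : Δ) :
    splitAt i (s, w) = (i.castSucc.succAbove s, w) := by
  have hi := i.isLt
  simp only [splitAt, Homeomorph.trans_apply, castC_apply]
  rcases lt_or_gt_of_ne h with h | h
  · have hs : Fin.cast (by omega) s = Fin.castAdd (n - 1 - i) (Fin.castAdd 1 (⟨s, h⟩ : Fin i)) :=
      Fin.ext rfl
    rw [hs, dsum_apply_castAdd, dsum_apply_castAdd, Fin.succAbove_of_castSucc_lt _ _ h]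
    rfl
  · have hs : Fin.cast (by omega) s =
        Fin.natAdd ((i : ℕ) + 1) (⟨s - (i + 1), by omega⟩ : Fin (n - 1 - i)) :=
      Fin.ext (by simp; omega)
    rw [hs, dsum_apply_natAdd,
      Fin.succAbove_of_le_castSucc _ _ (Fin.castSucc_le_castSucc_iff.2 h.le)]
    exact Prod.ext (Fin.ext (by simp [castC_apply]; omega)) rfl

lemma splitAt_apply_self_cons {n : ℕ} (i : Fin n) (b : Bool) (w : Δ) :
    splitAt i (i, b :: w) = (splitChild i b, w) := by
  have hi := i.isLt
  simp only [splitAt, Homeomorph.trans_apply, castC_apply]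
  have hs : Fin.cast (by omega) i = Fin.castAdd (n - 1 - i) (Fin.natAdd i (0 : Fin 1)) :=
    Fin.ext rfl
  rw [hs, dsum_apply_castAdd, dsum_apply_natAdd, split_apply_cons]
  refine Prod.ext (Fin.ext ?_) rfl
  cases b <;> simp [castC_apply, splitChild] <;> rfl

lemma eq_succAbove_or_eq_splitChild {n : ℕ} (i : Fin n) (t : Fin (n + 1)) :
    (∃ s ≠ i, t = i.castSucc.succAbove s) ∨ ∃ b, t = splitChild i b := by
  by_cases ht : t = i.castSucc
  · exact .inr ⟨false, ht⟩
  obtain ⟨s, rfl⟩ := Fin.exists_succAbove_eq ht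
  by_cases hs : s = i
  · exact .inr ⟨true, by simp [hs, splitChild]⟩
  · exact .inl ⟨s, hs, rfl⟩

def IsGrigMonomial {n : ℕ} (F : C n ≃ₜ C n) : Prop :=
  ∃ (gs : Fin n → C 1 ≃ₜ C 1) (α : Equiv.Perm (Fin n)), (∀ s, gs s ∈ Grig) ∧
    F = (dsumFam gs).trans (permC α)

lemma isGrigMonomial_of_forall {n : ℕ} {F : C n ≃ₜ C n}
    (h : ∀ s, ∃ u, ∃ g ∈ Grig, ∀ w, F (s, w) = (u, onCantor g w)) : IsGrigMonomial F := by
  choose u gs hgs hF using h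
  have hu : Function.Injective u := fun s s' hss' => by
    let w : Δ := fun _ => false
    have hFeq : F (s', onCantor (gs s')⁻¹ (onCantor (gs s) w)) = F (s, w) := by
      rw [hF, hF, hss', onCantor_onCantor_inv]
    exact (congrArg Prod.fst (F.injective hFeq)).symm
  refine ⟨gs, Equiv.ofBijective u (Finite.injective_iff_bijective.1 hu), hgs, ?_⟩
  ext1 ⟨s, w⟩
  rw [hF, Homeomorph.trans_apply, dsumFam_apply, permC_apply]
  rfl

lemma isGrigMonomial_of_mem_grig {g : C 1 ≃ₜ C 1} (hg : g ∈ Grig) : IsGrigMonomial g :=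
  isGrigMonomial_of_forall fun s => ⟨0, g, hg, fun w => by
    rw [Subsingleton.elim s 0, apply_zero_eq_onCantor]⟩

lemma IsGrigMonomial.exists_trans_splitAt_eq {n : ℕ} {F : C n ≃ₜ C n} (hF : IsGrigMonomial F)
    (i : Fin n) : ∃ (j : Fin n) (F' : C (n + 1) ≃ₜ C (n + 1)),
      IsGrigMonomial F' ∧ F.trans (splitAt i) = (splitAt j).trans F' := by
  obtain ⟨gs, α, hgs, rfl⟩ := hF
  set j := α.symm i
  refine ⟨j, (splitAt j).symm.trans (((dsumFam gs).trans (permC α)).trans (splitAt i)),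
    isGrigMonomial_of_forall fun t => ?_, by ext1; simp⟩
  rcases eq_succAbove_or_eq_splitChild j t with ⟨s, hs, rfl⟩ | ⟨b, rfl⟩
  · have hαs : α s ≠ i := by rw [Ne, ← Equiv.eq_symm_apply]; exact hs
    refine ⟨i.castSucc.succAbove (α s), gs s, hgs s, fun w => ?_⟩
    have hsplit : (splitAt j).symm (j.castSucc.succAbove s, w) = (s, w) := by
      rw [Homeomorph.symm_apply_eq, splitAt_apply_of_ne hs]
    simp only [Homeomorph.trans_apply, hsplit, dsumFam_apply, permC_apply,
      splitAt_apply_of_ne hαs]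
  · obtain ⟨ε, sec, hsec, hgj⟩ := hasSectionsInGrig_of_mem (hgs j)
    refine ⟨splitChild i (xor b ε), sec b, hsec b, fun w => ?_⟩
    have hsplit : (splitAt j).symm (splitChild j b, w) = (j, b :: w) := by
      rw [Homeomorph.symm_apply_eq, splitAt_apply_self_cons]
    have hαj : α j = i := α.apply_symm_apply i
    simp only [Homeomorph.trans_apply, hsplit, dsumFam_apply, permC_apply, hgj, hαj,
      splitAt_apply_self_cons]

lemma IsForest.exists_trans_eq {m n : ℕ} {t : C m ≃ₜ C n} (ht : IsForest t)
    {G : C m ≃ₜ C m} (hG : IsGrigMonomial G) :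
    ∃ (t' : C m ≃ₜ C n) (F : C n ≃ₜ C n), IsForest t' ∧ IsGrigMonomial F ∧
      G.trans t = t'.trans F := by
  induction ht with
  | refl => exact ⟨Homeomorph.refl _, G, .refl m, hG, rfl⟩
  | step i _ ih =>
    obtain ⟨t', F, ht', hF, heq⟩ := ih
    obtain ⟨j, F', hF', heq'⟩ := hF.exists_trans_splitAt_eq i
    refine ⟨t'.trans (splitAt j), F', ht'.step j, hF', ?_⟩
    calc _ = (t'.trans F).trans (splitAt i) := congrArg (·.trans (splitAt i)) heq
      _ = t'.trans ((splitAt j).trans F') := congrArg t'.trans heq'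

theorem grig_tree_expansion (n : ℕ) (t : C 1 ≃ₜ C n) (ht : IsForest t)
    (g : C 1 ≃ₜ C 1) (hg : g ∈ Grig) :
    ∃ (t' : C 1 ≃ₜ C n) (gs : Fin n → (C 1 ≃ₜ C 1)) (α : Equiv.Perm (Fin n)),
      IsForest t' ∧ (∀ i, gs i ∈ Grig) ∧
      g.trans t = (t'.trans (dsumFam gs)).trans (permC α) := by
  obtain ⟨t', F, ht', ⟨gs, α, hgs, rfl⟩, heq⟩ :=
    ht.exists_trans_eq (isGrigMonomial_of_mem_grig hg)
  exact ⟨t', gs, α, ht', hgs, heq⟩
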